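/- M_AP can fail to be group strategyproof when two tasks have equal value: in the instance with three agents a_1, a_2, a_3 each of capacity 1, two tasks t_1, t_2 both of value 1, and true edge sets T_1 = {t_1, t_2}, T_2 = {t_2}, T_3 = {t_1}, under truthful reporting M_AP assigns t_1 to a_1 and t_2 to a_2 (and a_3 gets nothing), but if a_1 reports only {t_2} (with a_2, a_3 truthful) then M_AP assigns t_2 to a_1 and t_1 to a_3; thus the coalition {a_1, a_3} can deviate so that a_1's utility is unchanged and a_3's utility strictly increases. -/
import Mathlib


abbrev Matching (n m : ℕ) := Fin m → Option (Fin n)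

def load {n m : ℕ} (μ : Matching n m) (i : Fin n) : ℕ :=
  (Finset.univ.filter fun j => μ j = some i).card

def assignedSet {n m : ℕ} (μ : Matching n m) (i : Fin n) : Finset (Fin m) :=
  Finset.univ.filter fun j => μ j = some i

def IsBMatching {n m : ℕ} (b : Fin n → ℕ) (E : Fin n → Finset (Fin m))
    (μ : Matching n m) : Prop :=
  (∀ j i, μ j = some i → j ∈ E i) ∧ ∀ i, load μ i ≤ b i

noncomputable def util {n m : ℕ} (q : Fin m → ℝ) (μ : Matching n m) (i : Fin n) : ℝ :=
  ∑ j ∈ assignedSet μ i, q j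

noncomputable def welfare {n m : ℕ} (q : Fin m → ℝ) (μ : Matching n m) : ℝ :=
  ∑ i, util q μ i

/-- Task processing order: decreasing value, ties broken by smaller task index. -/
noncomputable def taskOrder {m : ℕ} (q : Fin m → ℝ) : List (Fin m) :=
  (List.finRange m).mergeSort fun j k => decide (q k < q j ∨ (q j = q k ∧ j ≤ k))

noncomputable def apStep {n m : ℕ} (b : Fin n → ℕ) (E : Fin n → Finset (Fin m))
    (μ : Matching n m) (j : Fin m) : Matching n m :=
  match (List.finRange n).find? (fun i => decide (j ∈ E i ∧ load μ i < b i)) with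
  | some i => Function.update μ j (some i)
  | none => μ

/-- The mechanism `M_AP`. -/
noncomputable def MAP {n m : ℕ} (b : Fin n → ℕ) (q : Fin m → ℝ)
    (E : Fin n → Finset (Fin m)) : Matching n m :=
  (taskOrder q).foldl (apStep b E) (fun _ => none)

/-- The `min k |S|` highest-valued tasks of `S` (ties broken by smaller index). -/
noncomputable def topTasks {m : ℕ} (q : Fin m → ℝ) (S : Finset (Fin m)) (k : ℕ) :
    Finset (Fin m) :=
  (((taskOrder q).filter fun j => decide (j ∈ S)).take k).toFinset

noncomputable def remTasks {n m : ℕ} (b : Fin n → ℕ) (q : Fin m → ℝ)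
    (E : Fin n → Finset (Fin m)) : ℕ → Finset (Fin m)
  | 0 => Finset.univ
  | i + 1 =>
    if h : i < n then
      remTasks b q E i \ topTasks q (E ⟨i, h⟩ ∩ remTasks b q E i) (b ⟨i, h⟩)
    else remTasks b q E i

/-- Agent `i`'s FCFS policy / allocation `B_i`. -/
noncomputable def FCFS {n m : ℕ} (b : Fin n → ℕ) (q : Fin m → ℝ)
    (E : Fin n → Finset (Fin m)) (i : Fin n) : Finset (Fin m) :=
  topTasks q (E i ∩ remTasks b q E i.val) (b i)

/-- Three agents, each of capacity `1`. -/
def bEx : Fin 3 → ℕ := fun _ => 1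

/-- Two tasks, both of value `1`. -/
noncomputable def qEx : Fin 2 → ℝ := fun _ => 1

/-- True edge sets: `T₁ = {t₁, t₂}`, `T₂ = {t₂}`, `T₃ = {t₁}`. -/
def TEx : Fin 3 → Finset (Fin 2) := ![{0, 1}, {1}, {0}]

/-- The deviated profile in which agent `a₁` reports only `{t₂}`. -/
def TEx' : Fin 3 → Finset (Fin 2) := Function.update TEx 0 {1}

lemma taskOrder_qEx : taskOrder qEx = [0, 1] := by
  have h : (List.finRange 2) = [0, 1] := by decide
  rw [taskOrder, h]
  simp [List.mergeSort, qEx]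

lemma MAP_TEx : MAP bEx qEx TEx = fun j => if j = 0 then some 0 else some 1 := by
  rw [MAP, taskOrder_qEx]
  funext j
  fin_cases j <;> decide

lemma MAP_TEx2 : MAP bEx qEx TEx' = fun j => if j = 0 then some 2 else some 0 := by
  rw [MAP, taskOrder_qEx]
  funext j
  fin_cases j <;> decide

/-- `M_AP` fails group strategyproofness when two tasks have equal value: truthfully,
`a₁` gets `t₁`, `a₂` gets `t₂` and `a₃` gets nothing; if `a₁` reports only `{t₂}` then
`a₁` gets `t₂` and `a₃` gets `t₁`, so the coalition `{a₁, a₃}` deviates with `a₁`'s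
utility unchanged and `a₃`'s utility strictly increased. -/
theorem MAP_not_group_strategyproof_equal_values :
    MAP bEx qEx TEx 0 = some 0 ∧ MAP bEx qEx TEx 1 = some 1 ∧
    (∀ j, MAP bEx qEx TEx j ≠ some 2) ∧
    MAP bEx qEx TEx' 1 = some 0 ∧ MAP bEx qEx TEx' 0 = some 2 ∧
    util qEx (MAP bEx qEx TEx') 0 = util qEx (MAP bEx qEx TEx) 0 ∧
    util qEx (MAP bEx qEx TEx) 2 < util qEx (MAP bEx qEx TEx') 2 := by
  refine ⟨?_, ?_, ?_, ?_, ?_, ?_, ?_⟩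
  · rw [MAP_TEx]; rfl
  · rw [MAP_TEx]; rfl
  · intro j; rw [MAP_TEx]; fin_cases j <;> simp
  · rw [MAP_TEx2]; rfl
  · rw [MAP_TEx2]; rfl
  · rw [MAP_TEx, MAP_TEx2]
    have h1 : assignedSet (fun j : Fin 2 => if j = 0 then some 2 else some 0) (0:Fin 3) = {1} := by decide
    have h2 : assignedSet (fun j : Fin 2 => if j = 0 then some 0 else some 1) (0:Fin 3) = {0} := by decide
    simp [util, h1, h2, qEx]
  · rw [MAP_TEx, MAP_TEx2]
    have h1 : assignedSet (fun j : Fin 2 => if j = 0 then some 0 else some 1) (2:Fin 3) = ∅ := by decide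
    have h2 : assignedSet (fun j : Fin 2 => if j = 0 then some 2 else some 0) (2:Fin 3) = {0} := by decide
    simp [util, h1, h2, qEx]
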